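/- Let K : ℝ → ℝ be a smoothing kernel with bound M, let ν > 0, and set h_ν(x) = (1/ν)·K(x/ν). Assume h_ν is Lipschitz continuous on ℝ. If σ_0 ∈ (0,∞) and {σ_n} ⊂ (0,∞) is any sequence with σ_n → σ_0, then V_ν(·, σ_n) converges to V_ν(·, σ_0) uniformly on ℝ, i.e., sup_{x ∈ ℝ} |V_ν(x,σ_n) − V_ν(x,σ_0)| → 0 as n → ∞. -/

import Mathlib

open MeasureTheory ProbabilityTheory Real Filter

/-- The short-exposure PSF `h_ν(x) = (1/ν) K(x/ν)`. -/
noncomputable def shortPSF (K : ℝ → ℝ) (ν : ℝ) (x : ℝ) : ℝ := (1 / ν) * K (x / ν)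

/-- `V_ν(x,σ) = Var[h_ν(x-Θ)] = E[h_ν(x-Θ)²] − (E[h_ν(x-Θ)])²` where `Θ ~ N(0,σ²)`. -/
noncomputable def Vnu (K : ℝ → ℝ) (ν σ x : ℝ) : ℝ :=
  (∫ θ, (shortPSF K ν (x - θ)) ^ 2 ∂(gaussianReal 0 (σ ^ 2).toNNReal))
    - (∫ θ, shortPSF K ν (x - θ) ∂(gaussianReal 0 (σ ^ 2).toNNReal)) ^ 2

/-!
Writing `Θ = σZ` with `Z` standard Gaussian, `V_ν(x,σ)` is the variance of `h_ν(x − σZ)`. On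
functions bounded by `B` the variance `E[f²] − (E f)²` is `4B`-Lipschitz for the `L¹` distance, and
the Lipschitz bound on `h_ν` gives `E|h_ν(x − σZ) − h_ν(x − τZ)| ≤ L |σ − τ| E|Z|`. Hence
`σ ↦ V_ν(x,σ)` is Lipschitz with a constant independent of `x`.
-/

lemma tendsto_iSup_abs_of_abs_le {ι α : Type*} {l : Filter ι} {F : ι → α → ℝ} {c : ι → ℝ}
    (hF : ∀ n x, |F n x| ≤ c n) (hc : Tendsto c l (nhds 0)) :
    Tendsto (fun n => ⨆ x, |F n x|) l (nhds 0) := by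
  refine squeeze_zero (fun n => Real.iSup_nonneg fun x => abs_nonneg _)
    (fun n => Real.iSup_le (fun x => (hF n x).trans (le_abs_self _)) (abs_nonneg _)) ?_
  simpa using hc.abs

section variance

variable {Ω : Type*} [MeasurableSpace Ω] {μ : Measure Ω} [IsProbabilityMeasure μ]
  {f g : Ω → ℝ} {B : ℝ}

lemma abs_integral_le_of_abs_le (hf : ∀ ω, |f ω| ≤ B) : |∫ ω, f ω ∂μ| ≤ B := by
  simpa using norm_integral_le_of_norm_le_const (μ := μ) (f := f) (ae_of_all _ hf)

lemma abs_sq_sub_sq_le {a b B : ℝ} (ha : |a| ≤ B) (hb : |b| ≤ B) :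
    |a ^ 2 - b ^ 2| ≤ 2 * B * |a - b| := by
  rw [sq_sub_sq, abs_mul, two_mul]
  gcongr
  exact (abs_add_le a b).trans (add_le_add ha hb)

lemma abs_variance_sub_variance_le (hfm : AEStronglyMeasurable f μ)
    (hgm : AEStronglyMeasurable g μ) (hf : ∀ ω, |f ω| ≤ B) (hg : ∀ ω, |g ω| ≤ B) :
    |((∫ ω, f ω ^ 2 ∂μ) - (∫ ω, f ω ∂μ) ^ 2) - ((∫ ω, g ω ^ 2 ∂μ) - (∫ ω, g ω ∂μ) ^ 2)|
      ≤ 4 * B * ∫ ω, |f ω - g ω| ∂μ := by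
  have hfi : Integrable f μ := .of_bound hfm B (ae_of_all _ hf)
  have hgi : Integrable g μ := .of_bound hgm B (ae_of_all _ hg)
  have hf2 : Integrable (fun ω => f ω ^ 2) μ := .of_bound (hfm.pow 2) (B ^ 2) <| ae_of_all _
    fun ω => (abs_pow _ _).trans_le (pow_le_pow_left₀ (abs_nonneg _) (hf ω) 2)
  have hg2 : Integrable (fun ω => g ω ^ 2) μ := .of_bound (hgm.pow 2) (B ^ 2) <| ae_of_all _
    fun ω => (abs_pow _ _).trans_le (pow_le_pow_left₀ (abs_nonneg _) (hg ω) 2)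
  have hB : 0 ≤ B := (abs_nonneg _).trans (abs_integral_le_of_abs_le (μ := μ) hf)
  have hsq : |(∫ ω, f ω ^ 2 ∂μ) - ∫ ω, g ω ^ 2 ∂μ| ≤ 2 * B * ∫ ω, |f ω - g ω| ∂μ := by
    rw [← integral_sub hf2 hg2, ← integral_const_mul]
    exact abs_integral_le_integral_abs.trans (integral_mono (hf2.sub hg2).abs
      ((hfi.sub hgi).abs.const_mul _) fun ω => abs_sq_sub_sq_le (hf ω) (hg ω))
  have hmean : |(∫ ω, f ω ∂μ) - ∫ ω, g ω ∂μ| ≤ ∫ ω, |f ω - g ω| ∂μ := by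
    rw [← integral_sub hfi hgi]
    exact abs_integral_le_integral_abs
  calc _ ≤ |(∫ ω, f ω ^ 2 ∂μ) - ∫ ω, g ω ^ 2 ∂μ| + |(∫ ω, f ω ∂μ) ^ 2 - (∫ ω, g ω ∂μ) ^ 2| := by
        rw [sub_sub_sub_comm]; exact abs_sub _ _
    _ ≤ 2 * B * ∫ ω, |f ω - g ω| ∂μ + 2 * B * ∫ ω, |f ω - g ω| ∂μ := by
        gcongr
        exact (abs_sq_sub_sq_le (abs_integral_le_of_abs_le hf) (abs_integral_le_of_abs_le hg)).trans
          (mul_le_mul_of_nonneg_left hmean (mul_nonneg zero_le_two hB))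
    _ = 4 * B * ∫ ω, |f ω - g ω| ∂μ := by ring

end variance

lemma gaussianReal_zero_sq_toNNReal_eq_map (σ : ℝ) :
    gaussianReal 0 (σ ^ 2).toNNReal = (gaussianReal 0 1).map (σ * ·) := by
  rw [gaussianReal_map_const_mul, mul_zero, mul_one]
  congr
  ext
  simp [Real.coe_toNNReal _ (sq_nonneg σ)]

lemma Vnu_eq_integral_gaussianReal_std {K : ℝ → ℝ} {ν : ℝ} (hK : Continuous (shortPSF K ν))
    (σ x : ℝ) :
    Vnu K ν σ x = (∫ z, shortPSF K ν (x - σ * z) ^ 2 ∂(gaussianReal 0 1))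
      - (∫ z, shortPSF K ν (x - σ * z) ∂(gaussianReal 0 1)) ^ 2 := by
  have hc : Continuous fun θ => shortPSF K ν (x - θ) := hK.comp (continuous_sub_left x)
  rw [Vnu, gaussianReal_zero_sq_toNNReal_eq_map,
    integral_map (f := fun θ => shortPSF K ν (x - θ) ^ 2) (measurable_const_mul σ).aemeasurable
      (hc.pow 2).aestronglyMeasurable,
    integral_map (measurable_const_mul σ).aemeasurable hc.aestronglyMeasurable]

lemma abs_shortPSF_le {K : ℝ → ℝ} {M : ℝ} (hK0 : ∀ x, 0 ≤ K x) (hKM : ∀ x, K x ≤ M)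
    (ν x : ℝ) : |shortPSF K ν x| ≤ |1 / ν| * M := by
  rw [shortPSF, abs_mul, abs_of_nonneg (hK0 _)]
  gcongr
  exact hKM _

lemma integral_abs_sub_comp_mul_le {f : ℝ → ℝ} {L : NNReal} (hf : LipschitzWith L f)
    (x σ τ : ℝ) :
    ∫ z, |f (x - σ * z) - f (x - τ * z)| ∂(gaussianReal 0 1)
      ≤ L * |σ - τ| * ∫ z, |z| ∂(gaussianReal 0 1) := by
  have hz : Integrable (fun z : ℝ => |z|) (gaussianReal 0 1) :=
    (memLp_id_gaussianReal 1).integrable le_rfl |>.abs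
  rw [← integral_const_mul]
  refine integral_mono_of_nonneg (ae_of_all _ fun _ => abs_nonneg _) (hz.const_mul _)
    (ae_of_all _ fun z => ?_)
  calc |f (x - σ * z) - f (x - τ * z)| ≤ L * |x - σ * z - (x - τ * z)| := by
        simpa only [Real.dist_eq] using hf.dist_le_mul (x - σ * z) (x - τ * z)
    _ = L * |σ - τ| * |z| := by
        rw [show x - σ * z - (x - τ * z) = (τ - σ) * z by ring, abs_mul, abs_sub_comm]; ring

lemma abs_Vnu_sub_Vnu_le {K : ℝ → ℝ} {M ν : ℝ} {L : NNReal} (hK0 : ∀ x, 0 ≤ K x)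
    (hKM : ∀ x, K x ≤ M) (hLip : LipschitzWith L (shortPSF K ν)) (σ τ x : ℝ) :
    |Vnu K ν σ x - Vnu K ν τ x|
      ≤ 4 * (|1 / ν| * M) * (L * ∫ z, |z| ∂(gaussianReal 0 1)) * |σ - τ| := by
  have hc : ∀ s, Continuous fun z => shortPSF K ν (x - s * z) := fun s =>
    hLip.continuous.comp (continuous_sub_left x |>.comp (continuous_const_mul s))
  simp only [Vnu_eq_integral_gaussianReal_std hLip.continuous]
  refine (abs_variance_sub_variance_le (hc σ).aestronglyMeasurable (hc τ).aestronglyMeasurable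
    (fun _ => abs_shortPSF_le hK0 hKM _ _) (fun _ => abs_shortPSF_le hK0 hKM _ _)).trans ?_
  have hB : 0 ≤ |1 / ν| * M := (abs_nonneg _).trans (abs_shortPSF_le hK0 hKM ν 0)
  calc _ ≤ 4 * (|1 / ν| * M) * (L * |σ - τ| * ∫ z, |z| ∂(gaussianReal 0 1)) := by
        gcongr; exact integral_abs_sub_comp_mul_le hLip x σ τ
    _ = _ := by ring

theorem Vnu_uniform_convergence_along_sequence_general
    (K : ℝ → ℝ) (M ν : ℝ)
    (hK0 : ∀ x, 0 ≤ K x) (hKM : ∀ x, K x ≤ M)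
    (L : NNReal) (hLip : LipschitzWith L (shortPSF K ν))
    (σ0 : ℝ) (σs : ℕ → ℝ)
    (hconv : Filter.Tendsto σs Filter.atTop (nhds σ0)) :
    Filter.Tendsto (fun n => ⨆ x : ℝ, |Vnu K ν (σs n) x - Vnu K ν σ0 x|)
      Filter.atTop (nhds 0) := by
  refine tendsto_iSup_abs_of_abs_le (fun n x => abs_Vnu_sub_Vnu_le hK0 hKM hLip (σs n) σ0 x) ?_
  simpa using ((hconv.sub_const σ0).abs.const_mul _)

theorem Vnu_uniform_convergence_along_sequence
    (K : ℝ → ℝ) (M ν : ℝ) (hν : 0 < ν)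
    (hK0 : ∀ x, 0 ≤ K x) (hKM : ∀ x, K x ≤ M)
    (hKeven : ∀ x, K (-x) = K x) (hKint : Integrable K)
    (L : NNReal) (hLip : LipschitzWith L (shortPSF K ν))
    (σ0 : ℝ) (hσ0 : 0 < σ0) (σs : ℕ → ℝ) (hσs : ∀ n, 0 < σs n)
    (hconv : Filter.Tendsto σs Filter.atTop (nhds σ0)) :
    Filter.Tendsto (fun n => ⨆ x : ℝ, |Vnu K ν (σs n) x - Vnu K ν σ0 x|)
      Filter.atTop (nhds 0) :=
  Vnu_uniform_convergence_along_sequence_general K M ν hK0 hKM L hLip σ0 σs hconv
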